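/- Let d ≥ 2 be an integer. For p ∈ (0,1) and n a positive integer, define Q(p,n) = (1 − (1−p)^n)^(n^(d−1)). If β > d−1 and n(p) = ⌊(−β·ln p)/p⌋, then Q(p, n(p)) → 1 as p → 0⁺; if 0 < β ≤ d−1, then Q(p, n(p)) → 0 as p → 0⁺. -/

import Mathlib

/-!
With `n` sites per line and `m = n ^ (d - 1)` lines, each line is empty with probability
`y = (1 - p) ^ n`, and `Q = (1 - y) ^ m` is squeezed by the expected number `E = m y` of empty
lines: `1 - E ≤ Q ≤ exp (-E)`. For `n = ⌊-β log p / p⌋` one has `y ≈ p ^ β` and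
`n p ≈ β |log p|`, so `E ≈ (β |log p|) ^ (d - 1) p ^ (β - (d - 1))`. This tends to `0` when
`β > d - 1` and to `∞` when `β ≤ d - 1`; in the critical case `β = d - 1` the logarithmic
factor alone drives `E` to infinity.
-/

open Filter Topology Real

lemma one_sub_pow_le_exp_neg_mul {x : ℝ} (hx : x ≤ 1) (n : ℕ) :
    (1 - x) ^ n ≤ exp (-(n * x)) :=
  calc (1 - x) ^ n ≤ exp (-x) ^ n := pow_le_pow_left₀ (by linarith) (one_sub_le_exp_neg x) n
    _ = exp (-(n * x)) := by rw [← exp_nat_mul]; ring_nf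

lemma exp_neg_mul_div_le_one_sub_pow {x : ℝ} (hx : x < 1) (n : ℕ) :
    exp (-(n * x) / (1 - x)) ≤ (1 - x) ^ n := by
  have hx' : 0 < 1 - x := by linarith
  have hlog : -x / (1 - x) ≤ log (1 - x) := by
    have := one_sub_inv_le_log_of_pos hx'
    rwa [show 1 - (1 - x)⁻¹ = -x / (1 - x) by field_simp; ring] at this
  rw [← exp_log (pow_pos hx' n), log_pow, exp_le_exp]
  calc -(n * x) / (1 - x) = n * (-x / (1 - x)) := by ring
    _ ≤ n * log (1 - x) := mul_le_mul_of_nonneg_left hlog n.cast_nonneg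

lemma one_sub_mul_le_one_sub_pow {y : ℝ} (hy : y ≤ 2) (m : ℕ) :
    1 - m * y ≤ (1 - y) ^ m := by
  simpa only [sub_eq_add_neg, mul_neg] using one_add_mul_le_pow (a := -y) (by linarith) m

section OneSubPow

variable {ι : Type*} {l : Filter ι} {y : ι → ℝ} {m : ι → ℕ}

theorem tendsto_one_sub_pow_nhds_one (hy : ∀ᶠ i in l, y i ∈ Set.Icc 0 1)
    (h : Tendsto (fun i => m i * y i) l (𝓝 0)) :
    Tendsto (fun i => (1 - y i) ^ m i) l (𝓝 1) := by
  refine tendsto_of_tendsto_of_tendsto_of_le_of_le' (by simpa using h.const_sub 1)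
    tendsto_const_nhds ?_ ?_
  · filter_upwards [hy] with i hi using one_sub_mul_le_one_sub_pow (by linarith [hi.2]) _
  · filter_upwards [hy] with i hi using pow_le_one₀ (by linarith [hi.2]) (by linarith [hi.1])

theorem tendsto_one_sub_pow_nhds_zero (hy : ∀ᶠ i in l, y i ≤ 1)
    (h : Tendsto (fun i => m i * y i) l atTop) :
    Tendsto (fun i => (1 - y i) ^ m i) l (𝓝 0) := by
  refine tendsto_of_tendsto_of_tendsto_of_le_of_le' tendsto_const_nhds
    (tendsto_exp_atBot.comp (tendsto_neg_atTop_atBot.comp h)) ?_ ?_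
  · filter_upwards [hy] with i hi using pow_nonneg (by linarith) _
  · filter_upwards [hy] with i hi using one_sub_pow_le_exp_neg_mul hi _

end OneSubPow

lemma tendsto_neg_log_pow_mul_rpow_nhdsGT_zero (k : ℕ) {ε : ℝ} (hε : 0 < ε) :
    Tendsto (fun p => (-log p) ^ k * p ^ ε) (𝓝[>] 0) (𝓝 0) := by
  refine ((isLittleO_abs_log_rpow_rpow_nhdsGT_zero k (neg_lt_zero.2 hε)).tendsto_div_nhds_zero
    ).congr' ?_
  filter_upwards [Ioo_mem_nhdsGT one_pos] with p hp
  rw [rpow_natCast, abs_of_nonpos (log_nonpos hp.1.le hp.2.le), rpow_neg hp.1.le, div_inv_eq_mul]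

noncomputable def thresholdScale (β p : ℝ) : ℕ := ⌊-β * log p / p⌋₊

section ThresholdScale

variable {β p : ℝ}

lemma thresholdScale_mul_le (hβ : 0 ≤ β) (hp0 : 0 < p) (hp1 : p ≤ 1) :
    (thresholdScale β p : ℝ) * p ≤ -β * log p := by
  have hnum : 0 ≤ -β * log p := by nlinarith [log_nonpos hp0.le hp1]
  exact (le_div_iff₀ hp0).1 (Nat.floor_le (div_nonneg hnum hp0.le))

lemma sub_lt_thresholdScale_mul (hp : 0 < p) :
    -β * log p - p < thresholdScale β p * p := by
  have := (div_lt_iff₀ hp).1 (sub_lt_iff_lt_add.1 (Nat.sub_one_lt_floor (-β * log p / p)))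
  rw [thresholdScale]
  linarith

lemma one_sub_pow_thresholdScale_le (hp0 : 0 < p) (hp1 : p ≤ 1) :
    (1 - p) ^ thresholdScale β p ≤ p ^ β * exp p :=
  calc (1 - p) ^ thresholdScale β p ≤ exp (-(thresholdScale β p * p)) :=
        one_sub_pow_le_exp_neg_mul hp1 _
    _ ≤ exp (log p * β + p) :=
        exp_le_exp.2 (by linarith [sub_lt_thresholdScale_mul (β := β) hp0])
    _ = p ^ β * exp p := by rw [exp_add, rpow_def_of_pos hp0]

lemma rpow_mul_exp_le_one_sub_pow_thresholdScale (hβ : 0 ≤ β) (hp0 : 0 < p) (hp1 : p < 1) :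
    p ^ β * exp (β * (log p * p) / (1 - p)) ≤ (1 - p) ^ thresholdScale β p := by
  have hp1' : 0 < 1 - p := by linarith
  calc p ^ β * exp (β * (log p * p) / (1 - p)) = exp (β * log p / (1 - p)) := by
        rw [rpow_def_of_pos hp0, ← exp_add]; congr 1; field_simp; ring
    _ ≤ exp (-(thresholdScale β p * p) / (1 - p)) := by
        gcongr; linarith [thresholdScale_mul_le hβ hp0 hp1.le]
    _ ≤ (1 - p) ^ thresholdScale β p := exp_neg_mul_div_le_one_sub_pow hp1 _

end ThresholdScale

section ExpectedEmptyLines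

variable {β : ℝ} {k : ℕ}

theorem tendsto_thresholdScale_pow_mul_one_sub_pow_zero (hk : (k : ℝ) < β) :
    Tendsto (fun p => (thresholdScale β p : ℝ) ^ k * (1 - p) ^ thresholdScale β p)
      (𝓝[>] 0) (𝓝 0) := by
  have hβ : 0 ≤ β := by linarith [k.cast_nonneg (α := ℝ)]
  have hbound :
      Tendsto (fun p => β ^ k * ((-log p) ^ k * p ^ (β - k)) * exp p) (𝓝[>] 0) (𝓝 0) := by
    have hexp : Tendsto exp (𝓝[>] 0) (𝓝 1) := by
      simpa using (continuous_exp.tendsto 0).mono_left nhdsWithin_le_nhds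
    simpa using ((tendsto_neg_log_pow_mul_rpow_nhdsGT_zero k (sub_pos.2 hk)).const_mul
      (β ^ k)).mul hexp
  refine tendsto_of_tendsto_of_tendsto_of_le_of_le' tendsto_const_nhds hbound ?_ ?_
  · filter_upwards [Ioo_mem_nhdsGT one_pos] with p hp
    exact mul_nonneg (by positivity) (pow_nonneg (by linarith [hp.2]) _)
  · filter_upwards [Ioo_mem_nhdsGT one_pos] with p ⟨hp0, hp1⟩
    set n := thresholdScale β p
    have hsplit : p ^ β = p ^ k * p ^ (β - k) := by
      rw [← rpow_natCast, ← rpow_add hp0, add_sub_cancel]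
    calc (n : ℝ) ^ k * (1 - p) ^ n ≤ n ^ k * (p ^ β * exp p) :=
          mul_le_mul_of_nonneg_left (one_sub_pow_thresholdScale_le hp0 hp1.le) (by positivity)
      _ = (n * p) ^ k * p ^ (β - k) * exp p := by rw [hsplit]; ring
      _ ≤ (β * -log p) ^ k * p ^ (β - k) * exp p := by
          gcongr ?_ ^ _ * _ * _
          linarith [thresholdScale_mul_le hβ hp0 hp1.le]
      _ = β ^ k * ((-log p) ^ k * p ^ (β - k)) * exp p := by ring

theorem tendsto_thresholdScale_pow_mul_one_sub_pow_atTop (hβ : 0 < β) (hk : β ≤ k) :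
    Tendsto (fun p => (thresholdScale β p : ℝ) ^ k * (1 - p) ^ thresholdScale β p)
      (𝓝[>] 0) atTop := by
  have hk0 : k ≠ 0 := by rintro rfl; norm_num at hk; linarith
  have hlog : Tendsto (fun p => -log p) (𝓝[>] 0) atTop :=
    tendsto_neg_atBot_atTop.comp tendsto_log_nhdsGT_zero
  have hcorr : Tendsto (fun p => exp (β * (log p * p) / (1 - p))) (𝓝[>] 0) (𝓝 1) := by
    have hden : Tendsto (fun p : ℝ => 1 - p) (𝓝[>] 0) (𝓝 1) :=
      ((continuous_const.sub continuous_id).tendsto' 0 1 (by simp)).mono_left nhdsWithin_le_nhds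
    have harg : Tendsto (fun p => β * (log p * p) / (1 - p)) (𝓝[>] 0) (𝓝 0) := by
      simpa [Pi.div_def] using
        ((tendsto_log_mul_rpow_nhdsGT_zero one_pos).const_mul β).div hden one_ne_zero
    simpa [Function.comp_def] using (continuous_exp.tendsto 0).comp harg
  refine tendsto_atTop_mono' _ ?_ (((tendsto_pow_atTop hk0).comp hlog).const_mul_atTop
    (by positivity : (0 : ℝ) < (β / 2) ^ k / 2))
  filter_upwards [Ioo_mem_nhdsGT one_pos, Ioo_mem_nhdsGT (half_pos hβ),
    hlog.eventually_ge_atTop 1, hcorr.eventually (lt_mem_nhds one_half_lt_one)]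
    with p ⟨hp0, hp1⟩ hpβ hL hhalf
  set n := thresholdScale β p
  calc (β / 2) ^ k / 2 * (-log p) ^ k = (β / 2 * -log p) ^ k / 2 := by rw [mul_pow]; ring
    _ ≤ (n * p) ^ k / 2 := by
        gcongr ?_ ^ _ / _
        nlinarith [sub_lt_thresholdScale_mul (β := β) hp0, hpβ.2,
          mul_le_mul_of_nonneg_left hL hβ.le]
    _ = n ^ k * (p ^ (k : ℝ) / 2) := by rw [rpow_natCast]; ring
    _ ≤ n ^ k * (p ^ β * exp (β * (log p * p) / (1 - p))) := by
        gcongr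
        calc p ^ (k : ℝ) / 2 ≤ p ^ β * (1 / 2) := by
              linarith [rpow_le_rpow_of_exponent_ge hp0 hp1.le hk]
          _ ≤ p ^ β * exp (β * (log p * p) / (1 - p)) :=
              mul_le_mul_of_nonneg_left hhalf.le (rpow_nonneg hp0.le β)
    _ ≤ n ^ k * (1 - p) ^ n :=
        mul_le_mul_of_nonneg_left (rpow_mul_exp_le_one_sub_pow_thresholdScale hβ.le hp0 hp1)
          (by positivity)

end ExpectedEmptyLines

/-- Threshold for the event that every line of the box contains an occupied site:
with `Q(p,n) = (1-(1-p)^n)^(n^(d-1))` and `n(p) = ⌊-β ln p / p⌋`,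
`Q(p,n(p)) → 1` as `p → 0⁺` if `β > d-1`, and `→ 0` if `0 < β ≤ d-1`. -/
theorem stmt_1 (d : ℕ) (hd : 2 ≤ d) (β : ℝ)
    (Q : ℝ → ℕ → ℝ) (hQ : ∀ p n, Q p n = (1 - (1 - p) ^ n) ^ (n ^ (d - 1)))
    (np : ℝ → ℕ) (hnp : ∀ p, np p = ⌊(-β * Real.log p) / p⌋₊) :
    ((d : ℝ) - 1 < β →
      Tendsto (fun p => Q p (np p)) (nhdsWithin 0 (Set.Ioi 0)) (nhds 1)) ∧
    (0 < β → β ≤ (d : ℝ) - 1 →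
      Tendsto (fun p => Q p (np p)) (nhdsWithin 0 (Set.Ioi 0)) (nhds 0)) := by
  have hk : ((d - 1 : ℕ) : ℝ) = d - 1 := by rw [Nat.cast_sub (by omega), Nat.cast_one]
  have hQnp : (fun p => Q p (np p)) =
      fun p => (1 - (1 - p) ^ thresholdScale β p) ^ (thresholdScale β p ^ (d - 1)) := by
    funext p
    rw [hQ, hnp, thresholdScale]
  have hy : ∀ᶠ p in 𝓝[>] (0 : ℝ), (1 - p) ^ thresholdScale β p ∈ Set.Icc 0 1 := by
    filter_upwards [Ioo_mem_nhdsGT one_pos] with p ⟨hp0, hp1⟩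
    exact ⟨pow_nonneg (by linarith) _, pow_le_one₀ (by linarith) (by linarith)⟩
  rw [hQnp, ← hk]
  refine ⟨fun hβ => tendsto_one_sub_pow_nhds_one hy ?_,
    fun hβ0 hβ => tendsto_one_sub_pow_nhds_zero (hy.mono fun _ h => h.2) ?_⟩
  · simpa only [Nat.cast_pow] using tendsto_thresholdScale_pow_mul_one_sub_pow_zero hβ
  · simpa only [Nat.cast_pow] using tendsto_thresholdScale_pow_mul_one_sub_pow_atTop hβ0 hβ
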